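/- Let D be a 4-anti-traceable oriented graph and let P = v_1 v_2 ... v_s be a longest anti-directed path in D. If s < |V(D)|, then v_1 and v_s are adjacent in D. -/

import Mathlib

variable {V : Type*}

/-- An oriented graph: no 2-cycles (and hence no loops). -/
def Oriented (A : V → V → Prop) : Prop := ∀ u v, A u v → ¬ A v u

/-- `AltPath A b l` : the consecutive vertices of `l` are joined by arcs whose
directions alternate, the first arc being forward iff `b = true`. -/
def AltPath (A : V → V → Prop) : Bool → List V → Prop
  | _, [] => True
  | _, [_] => True
  | b, x :: y :: rest => (if b then A x y else A y x) ∧ AltPath A (!b) (y :: rest)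

/-- An anti-directed path: distinct vertices with alternating arcs. -/
def IsAntiPath (A : V → V → Prop) (l : List V) : Prop :=
  l.Nodup ∧ ∃ b : Bool, AltPath A b l

/-- The induced subdigraph on the vertex set `S` has a hamiltonian anti-directed path. -/
def AntiTraceableOn [DecidableEq V] (A : V → V → Prop) (S : Finset V) : Prop :=
  ∃ l : List V, l.Nodup ∧ l.toFinset = S ∧ ∃ b : Bool, AltPath A b l

/-- The digraph has a hamiltonian anti-directed path. -/
def AntiTraceable [Fintype V] [DecidableEq V] (A : V → V → Prop) : Prop :=
  AntiTraceableOn A Finset.univ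

/-- `k`-anti-traceable: order at least `k` and every induced subdigraph on `k`
vertices has a hamiltonian anti-directed path. -/
def KAntiTraceable [Fintype V] [DecidableEq V] (k : ℕ) (A : V → V → Prop) : Prop :=
  k ≤ Fintype.card V ∧ ∀ S : Finset V, S.card = k → AntiTraceableOn A S

/-- An anti-directed cycle: a cyclic sequence of distinct vertices, of even
length at least 4, in which even-indexed vertices are sources and odd-indexed
vertices are sinks of the two incident arcs. -/
def AltCycle (A : V → V → Prop) (l : List V) : Prop :=
  l.Nodup ∧ 4 ≤ l.length ∧ l.length % 2 = 0 ∧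
  ∀ i : Fin l.length,
    if i.1 % 2 = 0 then
      A (l.get i) (l.get ⟨(i.1 + 1) % l.length, Nat.mod_lt _ (Nat.zero_lt_of_lt i.2)⟩)
    else
      A (l.get ⟨(i.1 + 1) % l.length, Nat.mod_lt _ (Nat.zero_lt_of_lt i.2)⟩) (l.get i)

/-- The arcs among `{a,b,c}` form a subset of the arcs of a directed triangle. -/
def SubDirTriangle (A : V → V → Prop) (a b c : V) : Prop :=
  (¬ A b a ∧ ¬ A c b ∧ ¬ A a c) ∨ (¬ A a b ∧ ¬ A b c ∧ ¬ A c a)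

/-!
Let `w` be a vertex off `P` and write `P = a p … q c`. If `a` and `c` were non-adjacent,
maximality of `P` would forbid five ways of lengthening it by `w`: at either end, next to
either end, or after exchanging `a` and `c`. Reversing every arc if necessary, `a` is the
tail of `ap`. If `c` is also the tail of `cq`, the quadruples `{a, p, c, w}` and `{a, q, c, w}`
force `w → a`, `w → c`, `p → c` and `q → a`, whereas `{a, p, q, c}` needs `c → p` or `a → q`.
If `c` is the head of `qc`, then `{a, q, c, w}` forces `w → a` and `q → a`, after which
`{a, p, c, w}` has no hamiltonian anti-directed path.
-/

def ArcDir (A : V → V → Prop) (b : Bool) (x y : V) : Prop := if b then A x y else A y x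

section ArcDir

variable {A : V → V → Prop} {b r : Bool} {x y : V}

theorem arcDir_not : ArcDir A (!b) x y ↔ ArcDir A b y x := by
  cases b <;> rfl

theorem arcDir_flip : ArcDir (flip A) b x y ↔ ArcDir A (!b) x y := by
  cases b <;> rfl

theorem eq_not_of_arcDir (hA : Oriented A) (hxy : ArcDir A b x y) (hyx : ArcDir A r y x) :
    r = !b := by
  cases b <;> cases r <;> first | rfl | exact absurd hyx (hA _ _ hxy)

end ArcDir

section AltPath

variable {A : V → V → Prop}

theorem altPath_cons_cons {b : Bool} {x y : V} {t : List V} :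
    AltPath A b (x :: y :: t) ↔ ArcDir A b x y ∧ AltPath A (!b) (y :: t) :=
  Iff.rfl

theorem altPath_flip : ∀ {b : Bool} {l : List V}, AltPath (flip A) b l ↔ AltPath A (!b) l
  | _, [] => Iff.rfl
  | _, [_] => Iff.rfl
  | _, _ :: _ :: _ => by rw [altPath_cons_cons, altPath_cons_cons, arcDir_flip, altPath_flip]

theorem antiTraceableOn_flip [DecidableEq V] {S : Finset V} :
    AntiTraceableOn (flip A) S ↔ AntiTraceableOn A S := by
  simp only [AntiTraceableOn, altPath_flip]
  refine exists_congr fun l => and_congr_right fun _ => and_congr_right fun _ =>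
    ⟨fun ⟨b, h⟩ => ⟨!b, h⟩, fun ⟨b, h⟩ => ⟨!b, by rwa [Bool.not_not]⟩⟩

theorem exists_arcDir_of_altPath {x y : V} :
    ∀ {b : Bool} {u : List V}, AltPath A b (u ++ [x, y]) → ∃ r, ArcDir A r y x
  | b, [], h => ⟨!b, arcDir_not.2 h.1⟩
  | _, [_], h => exists_arcDir_of_altPath (u := []) h.2
  | _, _ :: z :: u, h => exists_arcDir_of_altPath (u := z :: u) h.2

theorem altPath_append_cons_iff (hA : Oriented A) {x y : V} {r : Bool} (hr : ArcDir A r y x) :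
    ∀ {b : Bool} {u : List V}, AltPath A b (u ++ [x, y]) →
      ∀ v, (AltPath A b (u ++ x :: v) ↔ AltPath A (!r) (x :: v))
  | b, [], h, _ => by rw [eq_not_of_arcDir hA h.1 hr, Bool.not_not]; rfl
  | _, [_], h, v => (and_iff_right h.1).trans (altPath_append_cons_iff hA hr (u := []) h.2 v)
  | _, _ :: z :: u, h, v =>
    (and_iff_right h.1).trans (altPath_append_cons_iff hA hr (u := z :: u) h.2 v)

theorem altPath_reverse_four {b : Bool} {x₁ x₂ x₃ x₄ : V}
    (h : AltPath A b [x₁, x₂, x₃, x₄]) : AltPath A (!b) [x₄, x₃, x₂, x₁] := by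
  cases b <;> simp_all [AltPath]

end AltPath

theorem antiTraceableOn_of_card [DecidableEq V] {A : V → V → Prop} {k : ℕ}
    (h : ∀ S : Finset V, S.card = k → AntiTraceableOn A S) {l : List V} (hl : l.Nodup)
    (hk : l.length = k) : AntiTraceableOn A l.toFinset :=
  h _ (by rw [List.toFinset_card_of_nodup hl, hk])

theorem exists_altPath_of_not_adj [DecidableEq V] {A : V → V → Prop} {a x c y : V}
    (hnd : [a, x, c, y].Nodup) (hac : ¬ A a c) (hca : ¬ A c a)
    (h : AntiTraceableOn A [a, x, c, y].toFinset) :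
    ∃ m ∈ [[a, x, c, y], [a, y, c, x], [x, a, y, c], [y, a, x, c], [a, x, y, c], [a, y, x, c]],
      ∃ b, AltPath A b m := by
  obtain ⟨m, hmnd, hm, b, hb⟩ := h
  have hperm : m ∈ [a, x, c, y].permutations :=
    List.mem_permutations.2 (List.perm_of_nodup_nodup_toFinset_eq hmnd hnd hm)
  simp only [List.permutations, List.permutationsAux, List.foldr_cons, List.permutationsAux.rec,
    List.foldr_nil, List.permutationsAux2_snd_nil, List.permutationsAux2_snd_cons,
    List.append_nil, id_eq, List.cons_append, List.nil_append, List.mem_cons, List.not_mem_nil,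
    or_false] at hperm
  -- of the 24 orderings, those not listed (up to reversal) put `a` next to `c`
  casesm* _ ∨ _ <;> subst hperm <;>
  first
    | (refine ⟨_, ?_, _, hb⟩; simp; done)
    | (refine ⟨_, ?_, _, altPath_reverse_four hb⟩; simp; done)
    | cases b <;> simp [AltPath, hac, hca] at hb

section FiveVertices

variable [DecidableEq V] {A : V → V → Prop} {a p q c w : V}

theorem adj_of_sources (hA : Oriented A)
    (h4 : ∀ S : Finset V, S.card = 4 → AntiTraceableOn A S) (hnd : [a, p, c, q].Nodup)
    (hac : ¬ A a c) (hca : ¬ A c a) (hap : A a p) (hcq : A c q) : A c p ∨ A a q := by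
  obtain ⟨m, hm, b, hb⟩ :=
    exists_altPath_of_not_adj hnd hac hca (antiTraceableOn_of_card h4 hnd rfl)
  have := hA a p hap
  have := hA c q hcq
  fin_cases hm <;> cases b <;> simp [AltPath] at hb <;> tauto

theorem arc_of_sources (hA : Oriented A)
    (h4 : ∀ S : Finset V, S.card = 4 → AntiTraceableOn A S) (hnd : [a, p, c, w].Nodup)
    (hac : ¬ A a c) (hca : ¬ A c a) (hap : A a p) (haw : ¬ A a w) (hcw : ¬ A c w)
    (hwap : ¬ (A w a ∧ A w p)) : A w c ∧ (A w p ∨ A p c) := by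
  obtain ⟨m, hm, b, hb⟩ :=
    exists_altPath_of_not_adj hnd hac hca (antiTraceableOn_of_card h4 hnd rfl)
  have := hA a p hap
  fin_cases hm <;> cases b <;> simp [AltPath] at hb <;> tauto

theorem false_of_sources (hA : Oriented A)
    (h4 : ∀ S : Finset V, S.card = 4 → AntiTraceableOn A S) (hnd : [a, p, q, c, w].Nodup)
    (hac : ¬ A a c) (hca : ¬ A c a) (hap : A a p) (hcq : A c q)
    (haw : ¬ A a w) (hcw : ¬ A c w) (hwap : ¬ (A w a ∧ A w p)) (hwcq : ¬ (A w c ∧ A w q)) :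
    False := by
  obtain ⟨hwc, hpc⟩ := arc_of_sources hA h4 (by simp_all) hac hca hap haw hcw hwap
  obtain ⟨hwa, hqa⟩ := arc_of_sources hA h4 (by simp_all [eq_comm]) hca hac hcq hcw haw hwcq
  replace hpc : A p c := hpc.resolve_left fun hwp => hwap ⟨hwa, hwp⟩
  replace hqa : A q a := hqa.resolve_left fun hwq => hwcq ⟨hwc, hwq⟩
  rcases adj_of_sources hA h4 (by simp_all [eq_comm]) hac hca hap hcq with hcp | haq
  · exact hA _ _ hcp hpc
  · exact hA _ _ haq hqa

theorem false_of_source_sink (hA : Oriented A)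
    (h4 : ∀ S : Finset V, S.card = 4 → AntiTraceableOn A S) (hnd : [a, p, q, c, w].Nodup)
    (hac : ¬ A a c) (hca : ¬ A c a) (hap : A a p) (hqc : A q c)
    (haw : ¬ A a w) (hwc : ¬ A w c) (hwap : ¬ (A w a ∧ A w p)) (hcwq : ¬ (A c w ∧ A q w))
    (hcpqa : ¬ (A c w ∧ A c p ∧ A q a)) : False := by
  have hqcw : [a, q, c, w].Nodup := by simp_all
  obtain ⟨hwa, hqa⟩ : A w a ∧ A q a := by
    obtain ⟨m, hm, b, hb⟩ :=
      exists_altPath_of_not_adj hqcw hac hca (antiTraceableOn_of_card h4 hqcw rfl)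
    have := hA q c hqc
    fin_cases hm <;> cases b <;> simp [AltPath] at hb <;> tauto
  have hpcw : [a, p, c, w].Nodup := by simp_all
  obtain ⟨m, hm, b, hb⟩ :=
    exists_altPath_of_not_adj hpcw hac hca (antiTraceableOn_of_card h4 hpcw rfl)
  have := hA a p hap
  have := hA w a hwa
  fin_cases hm <;> cases b <;> simp [AltPath] at hb <;> tauto

end FiveVertices

/-- For an anti-directed path `a p … q c` with `ArcDir A β a p` and `ArcDir A γ c q`, and a
vertex `w` off it: none of `w a p … q c`, `a p … q c w`, `a w p … q c`, `a p … q w c`,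
`w c p … q a` is anti-directed. -/
def Unextendable (A : V → V → Prop) (β γ : Bool) (a p q c w : V) : Prop :=
  ¬ ArcDir A β a w ∧ ¬ ArcDir A γ c w ∧ ¬ (ArcDir A (!β) a w ∧ ArcDir A β w p) ∧
    ¬ (ArcDir A (!γ) c w ∧ ArcDir A γ w q) ∧
    ¬ (ArcDir A β c w ∧ ArcDir A β c p ∧ ArcDir A γ a q)

section Unextendable

variable {A : V → V → Prop} {a p q c w : V} {β γ : Bool}

theorem unextendable_flip :
    Unextendable (flip A) β γ a p q c w ↔ Unextendable A (!β) (!γ) a p q c w := by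
  simp only [Unextendable, arcDir_flip, Bool.not_not]

theorem not_unextendable_of_source [DecidableEq V] (hA : Oriented A)
    (h4 : ∀ S : Finset V, S.card = 4 → AntiTraceableOn A S) (hnd : [a, p, q, c, w].Nodup)
    (hac : ¬ A a c) (hca : ¬ A c a) (hap : A a p) (hcq : ArcDir A γ c q) :
    ¬ Unextendable A true γ a p q c w := by
  rintro ⟨h₁, h₂, h₃, h₄, h₅⟩
  cases γ
  · exact false_of_source_sink hA h4 hnd hac hca hap hcq h₁ h₂ h₃ h₄ h₅
  · exact false_of_sources hA h4 hnd hac hca hap hcq h₁ h₂ h₃ h₄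

theorem not_unextendable [DecidableEq V] (hA : Oriented A)
    (h4 : ∀ S : Finset V, S.card = 4 → AntiTraceableOn A S) (hnd : [a, p, q, c, w].Nodup)
    (hac : ¬ A a c) (hca : ¬ A c a) (hap : ArcDir A β a p) (hcq : ArcDir A γ c q) :
    ¬ Unextendable A β γ a p q c w := by
  cases β
  · intro hU
    refine not_unextendable_of_source (A := flip A) (γ := !γ) (fun u v h => hA v u h)
      (fun S hS => antiTraceableOn_flip.2 (h4 S hS)) hnd hca hac hap (arcDir_flip.2 ?_)
      (unextendable_flip.2 ?_) <;> simpa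
  · exact not_unextendable_of_source hA h4 hnd hac hca hap hcq

theorem unextendable_of_forall_perm {mid : List V} (hA : Oriented A)
    (hP : AltPath A β (a :: p :: (mid ++ [q, c]))) (hcq : ArcDir A γ c q)
    (hmax : ∀ m, m.Perm (w :: a :: p :: (mid ++ [q, c])) → ∀ b, ¬ AltPath A b m) :
    Unextendable A β γ a p q c w := by
  classical
  have hend := altPath_append_cons_iff hA hcq (u := a :: p :: mid) hP
  refine ⟨fun h => ?_, fun h => ?_, fun ⟨h, h'⟩ => ?_, fun ⟨h, h'⟩ => ?_, fun ⟨h, h', h''⟩ => ?_⟩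
  · refine hmax _ (.refl _) (!β) ⟨arcDir_not.2 h, ?_⟩
    rwa [Bool.not_not]
  · refine hmax (a :: p :: (mid ++ [q, c, w])) ?_ β
      ((hend [c, w]).2 ⟨arcDir_not.2 hcq, by rwa [Bool.not_not], trivial⟩)
    simp only [List.perm_iff_count, List.count_cons, List.count_append]; omega
  · refine hmax (a :: w :: p :: (mid ++ [q, c])) (.swap _ _ _) (!β) ⟨h, ?_⟩
    rw [Bool.not_not]
    exact ⟨h', hP.2⟩
  · refine hmax (a :: p :: (mid ++ [q, w, c])) ?_ β
      ((hend [w, c]).2 ⟨arcDir_not.2 h', by rw [Bool.not_not]; exact arcDir_not.1 h, trivial⟩)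
    simp only [List.perm_iff_count, List.count_cons, List.count_append]; omega
  · have hend' := altPath_append_cons_iff hA hcq (u := p :: mid) hP.2
    refine hmax (w :: c :: p :: (mid ++ [q, a])) ?_ (!β) ⟨arcDir_not.2 h, ?_⟩
    · simp only [List.perm_iff_count, List.count_cons, List.count_append]; omega
    · rw [Bool.not_not]
      exact ⟨h', (hend' [a]).2 ⟨arcDir_not.2 h'', trivial⟩⟩

end Unextendable

theorem le_length_of_kAntiTraceable [Fintype V] [DecidableEq V] {A : V → V → Prop} {k : ℕ}
    (hk : KAntiTraceable k A) {l : List V} (hlong : ∀ m, IsAntiPath A m → m.length ≤ l.length) :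
    k ≤ l.length := by
  obtain ⟨S, -, hS⟩ := Finset.exists_subset_card_eq (s := Finset.univ) hk.1
  obtain ⟨m, hnd, rfl, hm⟩ := hk.2 S hS
  rw [← hS, List.toFinset_card_of_nodup hnd]
  exact hlong m ⟨hnd, hm⟩

theorem not_altPath_of_perm_cons {A : V → V → Prop} {l m : List V} {w : V}
    (hlong : ∀ m, IsAntiPath A m → m.length ≤ l.length) (hw : (w :: l).Nodup)
    (hm : m.Perm (w :: l)) (b : Bool) : ¬ AltPath A b m := fun h => by
  have := hlong m ⟨hm.nodup_iff.2 hw, b, h⟩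
  simp [hm.length_eq] at this

theorem exists_eq_cons_cons_append_pair {l : List V} (hl : 4 ≤ l.length) :
    ∃ a p mid q c, l = a :: p :: (mid ++ [q, c]) := by
  match l, hl with
  | a :: p :: t, hl =>
    obtain ⟨r, c, rfl⟩ := t.eq_nil_or_concat.resolve_left (by rintro rfl; simp at hl)
    obtain ⟨mid, q, rfl⟩ := r.eq_nil_or_concat.resolve_left (by rintro rfl; simp at hl)
    exact ⟨a, p, mid, q, c, by simp⟩

theorem stmt9 [Fintype V] [DecidableEq V] (A : V → V → Prop)
    (hA : Oriented A) (h4 : KAntiTraceable 4 A)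
    (l : List V) (hP : IsAntiPath A l)
    (hlong : ∀ m : List V, IsAntiPath A m → m.length ≤ l.length)
    (h2 : 2 ≤ l.length) (hs : l.length < Fintype.card V) :
    A (l.get ⟨0, by omega⟩) (l.get ⟨l.length - 1, by omega⟩) ∨
    A (l.get ⟨l.length - 1, by omega⟩) (l.get ⟨0, by omega⟩) := by
  obtain ⟨w, hw⟩ := Cardinal.exists_notMem_of_length_lt l (by simpa [Cardinal.mk_fintype] using hs)
  obtain ⟨a, p, mid, q, c, rfl⟩ :=
    exists_eq_cons_cons_append_pair (le_length_of_kAntiTraceable h4 hlong)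
  obtain ⟨hnd, β, hP⟩ := hP
  obtain ⟨γ, hcq⟩ := exists_arcDir_of_altPath (u := a :: p :: mid) hP
  have hwnd : (w :: a :: p :: (mid ++ [q, c])).Nodup := List.nodup_cons.2 ⟨hw, hnd⟩
  have hU := unextendable_of_forall_perm hA hP hcq fun m hm b =>
    not_altPath_of_perm_cons hlong hwnd hm b
  suffices A a c ∨ A c a by simpa using this
  by_contra hac
  rw [not_or] at hac
  exact not_unextendable hA h4.2 (by simp_all [List.nodup_append, eq_comm]) hac.1 hac.2 hP.1 hcq hU
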